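/- arXiv:1010.5937 — 3 statements merged into one kernel-verified Lean document; each statement's English description precedes it below -/
import Mathlib

section
/- Let T be a switch tree with a sink r, and let S be a one-sided convex point set with |S| = |T|. Then T admits an upward planar straight-line embedding into S such that r is mapped to the highest point of S. -/
/-!
Sorted by height, a one-sided convex point set is a convex chain: all triples taken bottom to
top have the same orientation, since otherwise the middle point would lie between the chords
through the other two and through `b(S)`, `t(S)` at its own height, hence in the hull of the
others. On a convex chain two chords whose index intervals are disjoint or nested meet only in
common endpoints. It therefore suffices to number the vertices of the tree so that arcs go up,
the intervals of any two arcs are disjoint or nested, and the sink `r` comes last. Such a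
numbering is built by induction: delete a leaf `ℓ ≠ r`, number the rest, and reinsert `ℓ`
directly above or below its neighbour according to the direction of its arc; the new arc then
joins consecutive positions and crosses nothing.
-/

open Finset

noncomputable section

/-- 2D cross product / determinant. -/
def det2 (u v : ℝ × ℝ) : ℝ := u.1 * v.2 - u.2 * v.1

/-- General position: pairwise distinct y-coordinates, no three collinear. -/
def GenPos (S : Finset (ℝ × ℝ)) : Prop :=
  (∀ p ∈ S, ∀ q ∈ S, p ≠ q → p.2 ≠ q.2) ∧
  (∀ p ∈ S, ∀ q ∈ S, ∀ r ∈ S, p ≠ q → p ≠ r → q ≠ r →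
    ¬ Collinear ℝ ({p, q, r} : Set (ℝ × ℝ)))

/-- Convex position: general position and no point in the convex hull of the others. -/
def ConvexPos (S : Finset (ℝ × ℝ)) : Prop :=
  GenPos S ∧ ∀ p ∈ S, p ∉ convexHull ℝ (↑(S.erase p) : Set (ℝ × ℝ))

def IsLowest (S : Finset (ℝ × ℝ)) (b : ℝ × ℝ) : Prop := b ∈ S ∧ ∀ p ∈ S, b.2 ≤ p.2

def IsHighest (S : Finset (ℝ × ℝ)) (t : ℝ × ℝ) : Prop := t ∈ S ∧ ∀ p ∈ S, p.2 ≤ t.2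

/-- One-sided convex point set: all points other than the lowest point `b` and the
highest point `t` lie strictly on one side of the line through `b` and `t`. -/
def OneSided (S : Finset (ℝ × ℝ)) : Prop :=
  ConvexPos S ∧ ∃ b t, IsLowest S b ∧ IsHighest S t ∧
    ((∀ p ∈ S, p ≠ b → p ≠ t → 0 < det2 (t - b) (p - b)) ∨
     (∀ p ∈ S, p ≠ b → p ≠ t → det2 (t - b) (p - b) < 0))

/-- Upward planar straight-line embedding of a digraph (given by its arc relation `Adj`)
into the point set `S` via the vertex placement `f`: vertices go injectively to points of
`S`, every arc goes strictly upward, and two (distinct) arcs may only meet at common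
endpoints. -/
def UPSE {V : Type*} (Adj : V → V → Prop) (S : Finset (ℝ × ℝ)) (f : V → ℝ × ℝ) : Prop :=
  Function.Injective f ∧ (∀ v, f v ∈ S) ∧
  (∀ u v, Adj u v → (f u).2 < (f v).2) ∧
  (∀ a b c d, Adj a b → Adj c d → (a, b) ≠ (c, d) →
    ∀ p, p ∈ segment ℝ (f a) (f b) → p ∈ segment ℝ (f c) (f d) →
      p ∈ ({f a, f b} : Set (ℝ × ℝ)) ∧ p ∈ ({f c, f d} : Set (ℝ × ℝ)))

/-- A directed tree: an orientation (no 2-cycles, no loops) whose underlying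
undirected graph is a tree. -/
def IsDirTree {V : Type*} (Adj : V → V → Prop) : Prop :=
  (∀ u v, Adj u v → ¬ Adj v u) ∧ (∀ v, ¬ Adj v v) ∧
  (SimpleGraph.fromRel Adj).IsTree

/-- Switch digraph: every vertex is a source or a sink. -/
def IsSwitch {V : Type*} (Adj : V → V → Prop) : Prop :=
  ∀ v, (∀ u, ¬ Adj u v) ∨ (∀ u, ¬ Adj v u)

def IntervalsNoncrossing {α : Type*} [LinearOrder α] (a b c d : α) : Prop :=
  b ≤ c ∨ d ≤ a ∨ (a ≤ c ∧ d ≤ b) ∨ (c ≤ a ∧ b ≤ d)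

namespace IntervalsNoncrossing

variable {α β : Type*} [LinearOrder α] [LinearOrder β] {a b c d : α}

lemma symm (h : IntervalsNoncrossing a b c d) : IntervalsNoncrossing c d a b := by
  unfold IntervalsNoncrossing at *
  tauto

lemma of_covBy_right (a b : α) (h : c ⋖ d) : IntervalsNoncrossing a b c d := by
  by_cases hbc : b ≤ c
  · exact Or.inl hbc
  by_cases hda : d ≤ a
  · exact Or.inr (Or.inl hda)
  exact Or.inr (Or.inr (Or.inl ⟨h.le_of_lt (not_le.1 hda), h.ge_of_gt (not_le.1 hbc)⟩))

lemma map_strictMono {φ : α → β} (hφ : StrictMono φ) (h : IntervalsNoncrossing a b c d) :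
    IntervalsNoncrossing (φ a) (φ b) (φ c) (φ d) := by
  simpa only [IntervalsNoncrossing, hφ.le_iff_le] using h

end IntervalsNoncrossing

/-- An upward one-page book embedding of the digraph `Adj`. -/
def IsUpwardStackLayout {V α : Type*} [LinearOrder α] (Adj : V → V → Prop) (g : V → α) :
    Prop :=
  (∀ u v, Adj u v → g u < g v) ∧
    ∀ a b c d, Adj a b → Adj c d → IntervalsNoncrossing (g a) (g b) (g c) (g d)

section InsertVertex

variable {V : Type*} [DecidableEq V] {ℓ : V} {n : ℕ}

def insertNumbering (g : {x // x ≠ ℓ} ≃ Fin n) (k : Fin (n + 1)) : V ≃ Fin (n + 1) :=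
  (Equiv.optionSubtypeNe ℓ).symm.trans ((Equiv.optionCongr g).trans (finSuccEquiv' k).symm)

@[simp] lemma insertNumbering_self (g : {x // x ≠ ℓ} ≃ Fin n) (k : Fin (n + 1)) :
    insertNumbering g k ℓ = k := by
  simp [insertNumbering]

lemma insertNumbering_of_ne (g : {x // x ≠ ℓ} ≃ Fin n) (k : Fin (n + 1)) {x : V} (hx : x ≠ ℓ) :
    insertNumbering g k x = k.succAbove (g ⟨x, hx⟩) := by
  simp [insertNumbering, Equiv.optionSubtypeNe_symm_of_ne hx]

lemma isUpwardStackLayout_insertNumbering {Adj : V → V → Prop} {g : {x // x ≠ ℓ} ≃ Fin n}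
    (hg : IsUpwardStackLayout (fun x y : {x // x ≠ ℓ} => Adj x y) g) {m : V} (hm : m ≠ ℓ)
    {k : Fin (n + 1)} (hin : ∀ x, Adj x ℓ → x = m ∧ k = (g ⟨m, hm⟩).succ)
    (hout : ∀ y, Adj ℓ y → y = m ∧ k = (g ⟨m, hm⟩).castSucc) :
    IsUpwardStackLayout Adj (insertNumbering g k) := by
  set f := insertNumbering g k
  have hnew : ∀ x y, Adj x y → x = ℓ ∨ y = ℓ → f x ⋖ f y := by
    rintro x y hxy (rfl | rfl)
    · obtain ⟨rfl, rfl⟩ := hout y hxy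
      simp [f, insertNumbering_of_ne _ _ hm]
    · obtain ⟨rfl, rfl⟩ := hin x hxy
      simp [f, insertNumbering_of_ne _ _ hm]
  refine ⟨fun x y hxy => ?_, fun a b c d hab hcd => ?_⟩
  · by_cases hx : x = ℓ ∨ y = ℓ
    · exact (hnew x y hxy hx).lt
    rw [not_or] at hx
    rw [insertNumbering_of_ne _ _ hx.1, insertNumbering_of_ne _ _ hx.2]
    exact Fin.strictMono_succAbove k (hg.1 ⟨x, hx.1⟩ ⟨y, hx.2⟩ hxy)
  · by_cases hl : a = ℓ ∨ b = ℓ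
    · exact (IntervalsNoncrossing.of_covBy_right _ _ (hnew a b hab hl)).symm
    by_cases hr : c = ℓ ∨ d = ℓ
    · exact IntervalsNoncrossing.of_covBy_right _ _ (hnew c d hcd hr)
    rw [not_or] at hl hr
    rw [insertNumbering_of_ne _ _ hl.1, insertNumbering_of_ne _ _ hl.2,
      insertNumbering_of_ne _ _ hr.1, insertNumbering_of_ne _ _ hr.2]
    exact (hg.2 ⟨a, hl.1⟩ ⟨b, hl.2⟩ ⟨c, hr.1⟩ ⟨d, hr.2⟩ hab hcd).map_strictMono
      (Fin.strictMono_succAbove k)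

lemma insertNumbering_le_of_le {g : {x // x ≠ ℓ} ≃ Fin n} {k : Fin (n + 1)} {r : V}
    (hr : r ≠ ℓ) (hgr : ∀ x, g x ≤ g ⟨r, hr⟩) (hk : k ≤ (g ⟨r, hr⟩).castSucc) (x : V) :
    insertNumbering g k x ≤ insertNumbering g k r := by
  rw [insertNumbering_of_ne _ _ hr]
  by_cases hx : x = ℓ
  · subst hx
    rw [insertNumbering_self]
    refine hk.trans ?_
    unfold Fin.succAbove
    split_ifs
    exacts [le_rfl, Fin.castSucc_lt_succ.le]
  · rw [insertNumbering_of_ne _ _ hx]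
    exact (Fin.strictMono_succAbove k).monotone (hgr _)

end InsertVertex

lemma SimpleGraph.IsTree.fromRel_subtype_ne {V : Type*} [Finite V] {Adj : V → V → Prop}
    (htree : (SimpleGraph.fromRel Adj).IsTree) {ℓ : V}
    (hℓ : ∃! m, (SimpleGraph.fromRel Adj).Adj ℓ m) :
    (SimpleGraph.fromRel fun x y : {x // x ≠ ℓ} => Adj x y).IsTree := by
  classical
  have := Fintype.ofFinite V
  have h : (SimpleGraph.fromRel fun x y : {x // x ≠ ℓ} => Adj x y) =
      (SimpleGraph.fromRel Adj).induce {ℓ}ᶜ := by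
    ext x y
    simp only [SimpleGraph.fromRel_adj, ne_eq, Subtype.ext_iff]
    rfl
  rw [h]
  exact ⟨htree.connected.induce_compl_singleton_of_degree_eq_one
    (SimpleGraph.degree_eq_one_iff_existsUnique_adj.2 hℓ), htree.isAcyclic.induce _⟩

theorem exists_isUpwardStackLayout {V : Type*} [Finite V] {Adj : V → V → Prop}
    (hasymm : ∀ u v, Adj u v → ¬ Adj v u) (htree : (SimpleGraph.fromRel Adj).IsTree)
    (r : V) (hr : ∀ u, ¬ Adj r u) :
    ∃ (n : ℕ) (g : V ≃ Fin n), IsUpwardStackLayout Adj g ∧ ∀ v, g v ≤ g r := by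
  induction V using Finite.induction_subsingleton_or_nontrivial with
  | hbase V =>
    have := Fintype.ofFinite V
    refine ⟨_, Fintype.equivFin V, ⟨fun u v h => ?_, fun a b _ _ h => ?_⟩, fun v => ?_⟩
    · exact absurd (Subsingleton.elim u v ▸ h) (hasymm u v h)
    · exact absurd (Subsingleton.elim a b ▸ h) (hasymm a b h)
    · rw [Subsingleton.elim v r]
  | hstep V IH =>
    classical
    have := Fintype.ofFinite V
    obtain ⟨ℓ, hrℓ, m, hℓm, hm_uniq⟩ : ∃ ℓ, r ≠ ℓ ∧ ∃! m, (SimpleGraph.fromRel Adj).Adj ℓ m := by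
      obtain ⟨u, v, huv, hu, hv⟩ := htree.exists_ne_and_degree_eq_one
      rw [SimpleGraph.degree_eq_one_iff_existsUnique_adj] at hu hv
      by_cases hur : u = r
      · exact ⟨v, hur ▸ huv, hv⟩
      · exact ⟨u, Ne.symm hur, hu⟩
    have hnbr : ∀ x, Adj x ℓ ∨ Adj ℓ x → x = m := fun x hx =>
      hm_uniq x ⟨fun h => (h ▸ hx).elim (fun h' => hasymm _ _ h' h') (fun h' => hasymm _ _ h' h'),
        hx.symm⟩
    have hmℓ : m ≠ ℓ := fun h => (SimpleGraph.fromRel Adj).loopless.irrefl ℓ (h ▸ hℓm)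
    obtain ⟨n, g, hg, hgr⟩ := IH {x // x ≠ ℓ} (Finite.card_subtype_lt (not_not.2 rfl))
      (fun x y hxy => hasymm x y hxy) (htree.fromRel_subtype_ne ⟨m, hℓm, hm_uniq⟩)
      ⟨r, hrℓ⟩ (fun u => hr u)
    set j := g ⟨m, hmℓ⟩
    by_cases hin : Adj m ℓ
    · refine ⟨n + 1, insertNumbering g j.succ, isUpwardStackLayout_insertNumbering hg hmℓ
        (fun x hx => ⟨hnbr x (Or.inl hx), rfl⟩)
        (fun y hy => absurd (hnbr y (Or.inr hy) ▸ hy) (hasymm _ _ hin)), ?_⟩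
      have hmr : j < g ⟨r, hrℓ⟩ := lt_of_le_of_ne (hgr _)
        (g.injective.ne (Subtype.coe_ne_coe.1 (show m ≠ r from fun h => hr ℓ (h ▸ hin))))
      exact insertNumbering_le_of_le hrℓ hgr (Fin.succ_le_castSucc_iff.2 hmr)
    · refine ⟨n + 1, insertNumbering g j.castSucc, isUpwardStackLayout_insertNumbering hg hmℓ
        (fun x hx => absurd (hnbr x (Or.inl hx) ▸ hx) hin)
        (fun y hy => ⟨hnbr y (Or.inr hy), rfl⟩), ?_⟩
      exact insertNumbering_le_of_le hrℓ hgr (Fin.castSucc_le_castSucc_iff.2 (hgr _))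

lemma det2_self (D : ℝ × ℝ) : det2 D D = 0 := by
  unfold det2
  ring

def det2L (D : ℝ × ℝ) : ℝ × ℝ →ₗ[ℝ] ℝ :=
  D.1 • LinearMap.snd ℝ ℝ ℝ - D.2 • LinearMap.fst ℝ ℝ ℝ

@[simp] lemma det2L_apply (D w : ℝ × ℝ) : det2L D w = det2 D w := by
  simp [det2L, det2]

namespace LinearMap

variable {E : Type*} [AddCommGroup E] [Module ℝ E] (φ : E →ₗ[ℝ] ℝ) {x y z : E}

lemma apply_mem_segment (hz : z ∈ segment ℝ x y) : φ z ∈ segment ℝ (φ x) (φ y) :=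
  image_segment ℝ φ.toAffineMap x y ▸ Set.mem_image_of_mem _ hz

lemma apply_eq_of_mem_segment (hxy : φ x = φ y) (hz : z ∈ segment ℝ x y) : φ z = φ x := by
  simpa [hxy] using φ.apply_mem_segment hz

lemma eq_of_mem_segment_of_lt_of_le (hz : z ∈ segment ℝ x y) (hx : φ z < φ x)
    (hy : φ z ≤ φ y) : z = y := by
  obtain ⟨a, b, ha, hb, hab, rfl⟩ := hz
  simp only [map_add, map_smul, smul_eq_mul] at hx hy
  obtain rfl : b = 1 - a := by linarith
  obtain rfl : a = 0 := by nlinarith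
  simp

end LinearMap

lemma eq_of_mem_segment_of_snd_le {a b c d z : ℝ × ℝ} (hab : a.2 < b.2) (hbc : b.2 ≤ c.2)
    (hcd : c.2 < d.2) (hz₁ : z ∈ segment ℝ a b) (hz₂ : z ∈ segment ℝ c d) : z = b ∧ z = c := by
  have h₁ := (LinearMap.snd ℝ ℝ ℝ).apply_mem_segment hz₁
  have h₂ := (LinearMap.snd ℝ ℝ ℝ).apply_mem_segment hz₂
  simp only [LinearMap.snd_apply, segment_eq_Icc hab.le, segment_eq_Icc hcd.le,
    Set.mem_Icc] at h₁ h₂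
  constructor
  · exact (-LinearMap.snd ℝ ℝ ℝ).eq_of_mem_segment_of_lt_of_le hz₁ (by simp; linarith)
      (by simp; linarith)
  · exact (LinearMap.snd ℝ ℝ ℝ).eq_of_mem_segment_of_lt_of_le (segment_symm ℝ c d ▸ hz₂)
      (by simp; linarith) (by simp; linarith)

lemma mem_segment_of_snd_eq {s q v : ℝ × ℝ} (hs : s.2 = v.2) (hq : q.2 = v.2)
    (hv : v.1 ∈ Set.uIcc s.1 q.1) : v ∈ segment ℝ s q := by
  rw [← Prod.mk.eta (p := s), ← Prod.mk.eta (p := q), hs, hq, ← Prod.image_mk_segment_left,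
    segment_eq_uIcc]
  exact ⟨v.1, hv, rfl⟩

lemma exists_mem_segment_snd_eq {u w : ℝ × ℝ} {h : ℝ} (hh : h ∈ Set.Icc u.2 w.2) :
    ∃ s ∈ segment ℝ u w, s.2 = h := by
  rw [← segment_eq_Icc (hh.1.trans hh.2)] at hh
  obtain ⟨s, hs, rfl⟩ : h ∈ (LinearMap.snd ℝ ℝ ℝ).toAffineMap '' segment ℝ u w := by
    rwa [image_segment]
  exact ⟨s, hs, rfl⟩

lemma det2_sub_eq_of_mem_segment {u w s v : ℝ × ℝ} (hs : s ∈ segment ℝ u w) (hsv : s.2 = v.2) :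
    det2 (w - u) (v - u) = (w.2 - u.2) * (s.1 - v.1) := by
  have h₀ : det2L (w - u) s = det2L (w - u) u :=
    (det2L (w - u)).apply_eq_of_mem_segment
      (by rw [eq_comm, ← sub_eq_zero, ← map_sub, det2L_apply, det2_self]) hs
  simp only [det2L_apply, det2, Prod.fst_sub, Prod.snd_sub] at h₀ ⊢
  linear_combination h₀ - (w.1 - u.1) * hsv

def IsConvexChain {ι : Type*} [LinearOrder ι] (p : ι → ℝ × ℝ) (σ : ℝ) : Prop :=
  StrictMono (fun i => (p i).2) ∧
    ∀ i j k, i < j → j < k → 0 < σ * det2 (p k - p i) (p j - p i)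

namespace IsConvexChain

variable {ι : Type*} [LinearOrder ι] {p : ι → ℝ × ℝ} {σ : ℝ} {i₁ j₁ i₂ j₂ : ι} {z : ℝ × ℝ}

lemma mem_pair_of_nested (hp : IsConvexChain p σ) (h₂ : i₂ < j₂) (hi : i₁ ≤ i₂) (hj : j₂ ≤ j₁)
    (hne : (i₁, j₁) ≠ (i₂, j₂)) (hz₁ : z ∈ segment ℝ (p i₁) (p j₁))
    (hz₂ : z ∈ segment ℝ (p i₂) (p j₂)) :
    z ∈ ({p i₁, p j₁} : Set (ℝ × ℝ)) ∧ z ∈ ({p i₂, p j₂} : Set (ℝ × ℝ)) := by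
  set φ := σ • det2L (p j₁ - p i₁)
  have hφ : ∀ k, φ (p k) - φ (p i₁) = σ * det2 (p j₁ - p i₁) (p k - p i₁) := fun k => by
    rw [← map_sub]
    simp [φ]
  have hpos : ∀ k, i₁ < k → k < j₁ → φ (p i₁) < φ (p k) := fun k hk hk' => by
    linarith [hφ k, hp.2 _ _ _ hk hk']
  have hend : φ (p j₁) = φ (p i₁) := by
    simpa [det2_self, sub_eq_zero] using hφ j₁
  have hz : φ z = φ (p i₁) := φ.apply_eq_of_mem_segment hend.symm hz₁
  rcases hi.lt_or_eq with hi | rfl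
  · have hzj : z = p j₂ := by
      refine φ.eq_of_mem_segment_of_lt_of_le hz₂ (hz ▸ hpos i₂ hi (h₂.trans_le hj)) ?_
      rcases hj.lt_or_eq with hj | rfl
      exacts [hz ▸ (hpos j₂ (hi.trans h₂) hj).le, (hz.trans hend.symm).le]
    rcases hj.lt_or_eq with hj | rfl
    · exact absurd (hz ▸ hzj ▸ hpos j₂ (hi.trans h₂) hj) (lt_irrefl _)
    · simp [hzj]
  · have hj : j₂ < j₁ := hj.lt_of_ne fun h => hne (h ▸ rfl)
    have hzi : z = p i₁ := φ.eq_of_mem_segment_of_lt_of_le (segment_symm ℝ (p i₁) (p j₂) ▸ hz₂)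
      (hz ▸ hpos j₂ h₂ hj) hz.le
    simp [hzi]

lemma mem_pair_of_intervalsNoncrossing (hp : IsConvexChain p σ) (h₁ : i₁ < j₁) (h₂ : i₂ < j₂)
    (hnc : IntervalsNoncrossing i₁ j₁ i₂ j₂) (hne : (i₁, j₁) ≠ (i₂, j₂))
    (hz₁ : z ∈ segment ℝ (p i₁) (p j₁)) (hz₂ : z ∈ segment ℝ (p i₂) (p j₂)) :
    z ∈ ({p i₁, p j₁} : Set (ℝ × ℝ)) ∧ z ∈ ({p i₂, p j₂} : Set (ℝ × ℝ)) := by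
  rcases hnc with h | h | ⟨hi, hj⟩ | ⟨hi, hj⟩
  · obtain ⟨rfl, h⟩ := eq_of_mem_segment_of_snd_le (hp.1 h₁) (hp.1.monotone h) (hp.1 h₂) hz₁ hz₂
    simp [h]
  · obtain ⟨rfl, h⟩ := eq_of_mem_segment_of_snd_le (hp.1 h₂) (hp.1.monotone h) (hp.1 h₁) hz₂ hz₁
    simp [h]
  · exact hp.mem_pair_of_nested h₂ hi hj hne hz₁ hz₂
  · exact (hp.mem_pair_of_nested h₁ hi hj hne.symm hz₂ hz₁).symm

lemma upse_comp (hp : IsConvexChain p σ) {S : Finset (ℝ × ℝ)} (hpS : ∀ i, p i ∈ S)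
    {V : Type*} {Adj : V → V → Prop} {g : V → ι} (hg : Function.Injective g)
    (hlay : IsUpwardStackLayout Adj g) : UPSE Adj S (p ∘ g) := by
  refine ⟨hp.1.injective.of_comp.comp hg, fun v => hpS _, fun u v h => hp.1 (hlay.1 u v h),
    fun a b c d hab hcd hne z hz₁ hz₂ => hp.mem_pair_of_intervalsNoncrossing (hlay.1 a b hab)
      (hlay.1 c d hcd) (hlay.2 a b c d hab hcd) ?_ hz₁ hz₂⟩
  simpa [hg.eq_iff] using hne

end IsConvexChain

lemma ConvexPos.det2_pos_of_snd_lt {S : Finset (ℝ × ℝ)} (hS : ConvexPos S) {b t : ℝ × ℝ}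
    (hb : IsLowest S b) (ht : IsHighest S t) {σ : ℝ}
    (hside : ∀ q ∈ S, q ≠ b → q ≠ t → 0 < σ * det2 (t - b) (q - b)) {u v w : ℝ × ℝ}
    (hu : u ∈ S) (hv : v ∈ S) (hw : w ∈ S) (huv : u.2 < v.2) (hvw : v.2 < w.2) :
    0 < σ * det2 (w - u) (v - u) := by
  by_contra hneg
  -- `v` lies between the chords `uw` and `bt` at its own height, so inside the hull of `S - v`
  have hbu := hb.2 u hu
  have htw := ht.2 w hw
  have hvbt := hside v hv (by rintro rfl; linarith) (by rintro rfl; linarith)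
  obtain ⟨s, hs, hsv⟩ := exists_mem_segment_snd_eq (u := u) (w := w) ⟨huv.le, hvw.le⟩
  obtain ⟨q, hq, hqv⟩ := exists_mem_segment_snd_eq (u := b) (w := t)
    ⟨hbu.trans huv.le, hvw.le.trans htw⟩
  rw [det2_sub_eq_of_mem_segment hs hsv] at hneg
  rw [det2_sub_eq_of_mem_segment hq hqv] at hvbt
  have hq' : 0 < σ * (q.1 - v.1) := by
    rw [mul_left_comm] at hvbt
    exact (mul_pos_iff_of_pos_left (by linarith)).1 hvbt
  have hs' : σ * (s.1 - v.1) ≤ 0 := by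
    rw [mul_left_comm] at hneg
    contrapose! hneg
    exact mul_pos (by linarith) hneg
  have hv₁ : v.1 ∈ Set.uIcc s.1 q.1 := by
    rw [Set.mem_uIcc]
    rcases lt_trichotomy σ 0 with hσ | rfl | hσ
    · right; constructor <;> nlinarith
    · simp at hq'
    · left; constructor <;> nlinarith
  have hhull : ∀ x ∈ S, x.2 ≠ v.2 → x ∈ convexHull ℝ (↑(S.erase v) : Set (ℝ × ℝ)) :=
    fun x hx hxv => subset_convexHull ℝ _
      (mem_coe.2 (mem_erase.2 ⟨fun h => hxv (congrArg Prod.snd h), hx⟩))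
  refine hS.2 v hv
    ((convex_convexHull ℝ _).segment_subset ?_ ?_ (mem_segment_of_snd_eq hsv hqv hv₁))
  · exact (convex_convexHull ℝ _).segment_subset (hhull u hu huv.ne) (hhull w hw hvw.ne') hs
  · exact (convex_convexHull ℝ _).segment_subset (hhull b hb.1 (by linarith))
      (hhull t ht.1 (by linarith)) hq

lemma Finset.exists_fin_enum_strictMono {α β : Type*} [LinearOrder β] (s : Finset α) (f : α → β)
    (hf : Set.InjOn f s) :
    ∃ e : Fin s.card → α, (∀ i, e i ∈ s) ∧ (∀ a ∈ s, ∃ i, e i = a) ∧ StrictMono (f ∘ e) := by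
  classical
  have hcard : (s.image f).card = s.card := card_image_of_injOn hf
  set o := (s.image f).orderEmbOfFin hcard
  choose e hes hef using fun i => mem_image.1 ((s.image f).orderEmbOfFin_mem hcard i)
  refine ⟨e, hes, fun a ha => ?_, fun i j hij => ?_⟩
  · obtain ⟨i, hi⟩ : f a ∈ Set.range o := by
      rw [range_orderEmbOfFin]
      simpa using mem_image_of_mem f ha
    exact ⟨i, hf (hes i) ha (by rw [hef, hi])⟩
  · simpa [Function.comp, hef] using o.strictMono hij

lemma OneSided.exists_isConvexChain {S : Finset (ℝ × ℝ)} (hS : OneSided S) :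
    ∃ (p : Fin S.card → ℝ × ℝ) (σ : ℝ),
      IsConvexChain p σ ∧ (∀ i, p i ∈ S) ∧ ∀ q ∈ S, ∃ i, p i = q := by
  obtain ⟨hconv, b, t, hb, ht, hside⟩ := hS
  obtain ⟨p, hpS, hpsurj, hmono⟩ :=
    S.exists_fin_enum_strictMono Prod.snd fun x hx y hy hxy => by_contra fun hne =>
      hconv.1.1 x hx y hy hne hxy
  have hchain : ∀ σ, (∀ q ∈ S, q ≠ b → q ≠ t → 0 < σ * det2 (t - b) (q - b)) →
      IsConvexChain p σ := fun σ hσ => ⟨hmono, fun i j k hij hjk =>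
    hconv.det2_pos_of_snd_lt hb ht hσ (hpS i) (hpS j) (hpS k) (hmono hij) (hmono hjk)⟩
  rcases hside with h | h
  · exact ⟨p, 1, hchain 1 (by simpa using h), hpS, hpsurj⟩
  · exact ⟨p, -1, hchain (-1) (by simpa using h), hpS, hpsurj⟩

lemma GenPos.eq_of_isHighest {S : Finset (ℝ × ℝ)} (hS : GenPos S) {a b : ℝ × ℝ}
    (ha : IsHighest S a) (hb : IsHighest S b) : a = b :=
  by_contra fun hne => hS.1 a ha.1 b hb.1 hne (le_antisymm (hb.2 a ha.1) (ha.2 b hb.1))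

theorem switch_tree_UPSE_one_sided_sink_general {V : Type} [Fintype V] (Adj : V → V → Prop)
    (hT : IsDirTree Adj)
    (r : V) (hr : ∀ u, ¬ Adj r u)
    (S : Finset (ℝ × ℝ)) (hS : OneSided S) (hcard : S.card = Fintype.card V)
    (t : ℝ × ℝ) (ht : IsHighest S t) :
    ∃ f : V → ℝ × ℝ, UPSE Adj S f ∧ f r = t := by
  obtain ⟨p, σ, hp, hpS, hpsurj⟩ := hS.exists_isConvexChain
  obtain ⟨n, g, hg, hgr⟩ := exists_isUpwardStackLayout hT.1 hT.2.2 r hr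
  obtain rfl : n = S.card := by rw [hcard, Fintype.card_congr g, Fintype.card_fin]
  refine ⟨p ∘ g, hp.upse_comp hpS g.injective hg, hS.1.1.eq_of_isHighest ⟨hpS _, ?_⟩ ht⟩
  intro q hq
  obtain ⟨i, rfl⟩ := hpsurj q hq
  obtain ⟨v, rfl⟩ := g.surjective i
  exact hp.1.monotone (hgr v)

theorem switch_tree_UPSE_one_sided_sink {V : Type} [Fintype V] (Adj : V → V → Prop)
    (hT : IsDirTree Adj) (hsw : IsSwitch Adj)
    (r : V) (hr : ∀ u, ¬ Adj r u)
    (S : Finset (ℝ × ℝ)) (hS : OneSided S) (hcard : S.card = Fintype.card V)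
    (t : ℝ × ℝ) (ht : IsHighest S t) :
    ∃ f : V → ℝ × ℝ, UPSE Adj S f ∧ f r = t :=
  switch_tree_UPSE_one_sided_sink_general Adj hT r hr S hS hcard t ht
end
end

section
/- Let T be a directed tree with n vertices, S a convex point set of size n, and u a vertex of T. Let T_1, ..., T_k be the connected components of T after removing u and its incident edges. In any upward planar straight-line embedding of T into S, for each i the vertices of T_i are mapped to a set of consecutive points of S (consecutive in the cyclic order along the convex hull). -/
open Finset

noncomputable section

/-- `w` is reachable from `v` in the underlying undirected graph by a walk avoiding `u`;
the components of `T - u` are exactly the classes of this relation on `V \ {u}`. -/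
def ReachAvoiding {V : Type*} (Adj : V → V → Prop) (u v w : V) : Prop :=
  ∃ p : (SimpleGraph.fromRel Adj).Walk v w, u ∉ p.support

/-- `A ⊆ S` consists of consecutive points of the convex point set `S`: it can be cut
off from the rest of `S` by a line (linear separation, which for points in convex
position is equivalent to contiguity in the cyclic order along the convex hull). -/
def ConsecutiveIn (A : Set (ℝ × ℝ)) (S : Finset (ℝ × ℝ)) : Prop :=
  ∃ (φ : (ℝ × ℝ) →ₗ[ℝ] ℝ) (c : ℝ),
    (∀ p ∈ A, c < φ p) ∧ ∀ p ∈ (↑S : Set (ℝ × ℝ)) \ A, φ p < c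


/-!
Let `C` be the component of `T - u` containing `v`. As `f` is a bijection onto `S`, it suffices
to show that `f '' C` and `f '' Cᶜ` have disjoint convex hulls; a line then separates them.

First, no chord of `f '' C` meets a chord of `f '' Cᶜ`. The two pairs are joined by walks of `T`,
one inside `C` and one avoiding `C` (through `u`). If the chords met, the second walk would cross
the line of the first chord, and by convex position the segment of the crossing edge meets that
chord itself. Repeating this from the other side gives two vertex-disjoint edges whose segments
meet, which a planar embedding forbids.

Second, disjoint parts `A`, `B` of a planar convex independent set with pairwise disjoint chords
have disjoint hulls. If `z` lies in both, write `z ∈ [a, w]` with `a ∈ A` and `w` in the hull of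
the rest of `A`. The line `aw` meets some chord `[b, b']` of `B` at a point `ζ`, and according to
the position of `ζ` on that line, either `[b, b']` meets the hull of `A` (and then, by the same
line-crossing argument, a chord of `A`), or `a` lies in the hull of `B`, or `w` does and we induct.
-/

section RealVectorSpace

variable {E : Type*} [AddCommGroup E] [Module ℝ E] {s : Set E}

theorem ConvexIndependent.mem_extremePoints_convexHull
    (hs : ConvexIndependent ℝ ((↑) : s → E)) {p : E} (hp : p ∈ s) :
    p ∈ (convexHull ℝ s).extremePoints ℝ := by
  have hpK : p ∉ convexHull ℝ (s \ {p}) :=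
    convexIndependent_set_iff_notMem_convexHull_sdiff.1 hs p hp
  refine mem_extremePoints_iff_forall_segment.2
    ⟨subset_convexHull ℝ s hp, fun x hx y hy hpxy => ?_⟩
  rcases (s \ {p}).eq_empty_or_nonempty with hempty | hne
  · have hsp : s ⊆ {p} := Set.sdiff_eq_empty.1 hempty
    have := convexHull_mono (𝕜 := ℝ) hsp
    rw [convexHull_singleton] at this
    exact Or.inl (this hx)
  have hsplit : convexHull ℝ s = convexJoin ℝ {p} (convexHull ℝ (s \ {p})) := by
    rw [← convexHull_insert hne, Set.insert_sdiff_singleton, Set.insert_eq_of_mem hp]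
  rw [hsplit, convexJoin_singleton_left, Set.mem_iUnion₂] at hx hy
  obtain ⟨x', hx', hxx'⟩ := hx
  obtain ⟨y', hy', hyy'⟩ := hy
  -- if `p ≠ x, y`, the collinear configurations force `p ∈ [x', y']`
  by_contra! hne'
  have h1 : Wbtw ℝ y p x' :=
    (mem_segment_iff_wbtw.1 hpxy).symm.trans_expand_left (mem_segment_iff_wbtw.1 hxx')
      hne'.1.symm
  have h2 : Wbtw ℝ x' p y' := h1.symm.trans_expand_left (mem_segment_iff_wbtw.1 hyy') hne'.2.symm
  exact hpK ((convex_convexHull ℝ _).segment_subset hx' hy' (mem_segment_iff_wbtw.2 h2))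

theorem ConvexIndependent.mem_segment_of_collinear (hs : ConvexIndependent ℝ ((↑) : s → E))
    {p q x : E} (hp : p ∈ s) (hq : q ∈ s) (hpq : p ≠ q) (hx : x ∈ convexHull ℝ s)
    (hcol : Collinear ℝ ({p, q, x} : Set E)) : x ∈ segment ℝ p q := by
  have hext : ∀ r ∈ s, ∀ y ∈ convexHull ℝ s, ∀ z ∈ convexHull ℝ s,
      r ∈ segment ℝ y z → y = r ∨ z = r := fun r hr =>
    (mem_extremePoints_iff_forall_segment.1 (hs.mem_extremePoints_convexHull hr)).2
  rcases hcol.wbtw_or_wbtw_or_wbtw with h | h | h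
  · rcases hext q hq p (subset_convexHull ℝ s hp) x hx (mem_segment_iff_wbtw.2 h) with h' | rfl
    · exact absurd h' hpq
    · exact right_mem_segment ℝ p x
  · exact mem_segment_iff_wbtw.2 h.symm
  · rcases hext p hp x hx q (subset_convexHull ℝ s hq) (mem_segment_iff_wbtw.2 h) with rfl | h'
    · exact left_mem_segment ℝ x q
    · exact absurd h'.symm hpq

theorem Wbtw.wbtw_or_wbtw_or_wbtw_of_collinear {a z w ζ : E} (hz : Wbtw ℝ a z w)
    (hcol : Collinear ℝ ({a, w, ζ} : Set E)) :
    Wbtw ℝ a ζ w ∨ Wbtw ℝ z a ζ ∨ Wbtw ℝ z w ζ := by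
  rcases hcol.wbtw_or_wbtw_or_wbtw with h | h | h
  · exact Or.inr (Or.inr (h.trans_left_right hz))
  · exact Or.inl h.symm
  · exact Or.inr (Or.inl (h.symm.trans_left_right hz.symm))

namespace AffineMap

variable (φ : E →ᵃ[ℝ] ℝ)

theorem mem_uIcc_of_mem_segment {x r r' : E} (h : x ∈ segment ℝ r r') :
    φ x ∈ Set.uIcc (φ r) (φ r') := by
  rw [← segment_eq_uIcc, ← image_segment]
  exact Set.mem_image_of_mem φ h

theorem exists_mem_segment_eq_of_mem_uIcc {c : ℝ} {r r' : E} (h : c ∈ Set.uIcc (φ r) (φ r')) :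
    ∃ x ∈ segment ℝ r r', φ x = c := by
  rwa [← segment_eq_uIcc, ← image_segment] at h

theorem exists_mem_uIcc_of_mem_convexHull {t : Set E} {z : E} (hz : z ∈ convexHull ℝ t) :
    ∃ a ∈ t, ∃ b ∈ t, φ z ∈ Set.uIcc (φ a) (φ b) := by
  have key : ∀ ψ : E →ᵃ[ℝ] ℝ, ∃ a ∈ t, ψ a ≤ ψ z := fun ψ => by
    by_contra! h
    exact lt_irrefl (ψ z) (convexHull_min h ((convex_Ioi (ψ z)).affine_preimage ψ) hz :)
  obtain ⟨a, ha, hle⟩ := key φ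
  obtain ⟨b, hb, hge⟩ := key (-φ)
  exact ⟨a, ha, b, hb, Set.Icc_subset_uIcc ⟨hle, by simpa using hge⟩⟩

end AffineMap

end RealVectorSpace

theorem SimpleGraph.Walk.exists_dart_zero_mem_uIcc {V : Type*} {G : SimpleGraph V} (g : V → ℝ)
    {x y : V} (W : G.Walk x y) (h0 : 0 ∈ Set.uIcc (g x) (g y)) (hy : g y ≠ 0) :
    ∃ d ∈ W.darts, 0 ∈ Set.uIcc (g d.fst) (g d.snd) := by
  induction W with
  | nil =>
    rw [Set.uIcc_self, Set.mem_singleton_iff] at h0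
    exact absurd h0.symm hy
  | @cons x m y h W ih =>
    by_cases hx : 0 ∈ Set.uIcc (g x) (g m)
    · exact ⟨_, List.mem_cons_self .., hx⟩
    · obtain ⟨d, hd, hd0⟩ := ih ((Set.uIcc_subset_uIcc_union_uIcc h0).resolve_left hx) hy
      exact ⟨d, List.mem_cons_of_mem _ hd, hd0⟩

def lineSide (p q : ℝ × ℝ) : ℝ × ℝ →ᵃ[ℝ] ℝ where
  toFun x := det2 (q - p) (x - p)
  linear := (q - p).1 • LinearMap.snd ℝ ℝ ℝ - (q - p).2 • LinearMap.fst ℝ ℝ ℝ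
  map_vadd' x v := by
    simp only [det2, vadd_eq_add, LinearMap.sub_apply, LinearMap.smul_apply, LinearMap.fst_apply,
      LinearMap.snd_apply, smul_eq_mul, Prod.fst_add, Prod.snd_add, Prod.fst_sub, Prod.snd_sub]
    ring

theorem lineSide_apply (p q x : ℝ × ℝ) : lineSide p q x = det2 (q - p) (x - p) := rfl

theorem collinear_of_lineSide_eq_zero {p q x : ℝ × ℝ} (h : lineSide p q x = 0) :
    Collinear ℝ ({p, q, x} : Set (ℝ × ℝ)) := by
  rcases eq_or_ne q p with rfl | hqp
  · simpa using collinear_pair ℝ q x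
  set a := q.1 - p.1
  set b := q.2 - p.2
  have hab : a ^ 2 + b ^ 2 ≠ 0 := by
    intro h0
    have ha : a = 0 := by nlinarith
    have hb : b = 0 := by nlinarith
    exact hqp (Prod.ext (sub_eq_zero.1 ha) (sub_eq_zero.1 hb))
  rw [lineSide_apply, det2] at h
  simp only [Prod.fst_sub, Prod.snd_sub] at h
  -- `x - p` is the multiple of `q - p` given by orthogonal projection
  have hx : x = ((a * (x.1 - p.1) + b * (x.2 - p.2)) / (a ^ 2 + b ^ 2)) • (q - p) +ᵥ p := by
    refine Prod.ext ?_ ?_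
    · simp only [vadd_eq_add, Prod.smul_fst, Prod.fst_add, Prod.fst_sub, smul_eq_mul]
      field_simp
      linear_combination (-b) * h
    · simp only [vadd_eq_add, Prod.smul_snd, Prod.snd_add, Prod.snd_sub, smul_eq_mul]
      field_simp
      linear_combination a * h
  rw [collinear_iff_of_mem (Set.mem_insert p _)]
  refine ⟨q - p, ?_⟩
  simp only [Set.mem_insert_iff, Set.mem_singleton_iff, forall_eq_or_imp, forall_eq]
  exact ⟨⟨0, by simp⟩, ⟨1, by simp⟩, ⟨_, hx⟩⟩

theorem lineSide_eq_zero_of_mem_segment {p q x : ℝ × ℝ} (h : x ∈ segment ℝ p q) :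
    lineSide p q x = 0 := by
  have := (lineSide p q).mem_uIcc_of_mem_segment h
  simpa [lineSide_apply, det2, mul_comm] using this

section Plane

variable {s : Set (ℝ × ℝ)}

theorem ConvexIndependent.lineSide_ne_zero
    (hs : ConvexIndependent ℝ ((↑) : s → ℝ × ℝ)) {p q x : ℝ × ℝ}
    (hp : p ∈ s) (hq : q ∈ s) (hx : x ∈ s) (hpq : p ≠ q) (hxp : x ≠ p) (hxq : x ≠ q) :
    lineSide p q x ≠ 0 := by
  intro h
  have hseg := hs.mem_segment_of_collinear hp hq hpq (subset_convexHull ℝ s hx)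
    (collinear_of_lineSide_eq_zero h)
  rw [← convexHull_pair] at hseg
  have := convexIndependent_set_iff_inter_convexHull_subset.1 hs {p, q}
    (Set.insert_subset hp (Set.singleton_subset_iff.2 hq)) ⟨hx, hseg⟩
  simp only [Set.mem_insert_iff, Set.mem_singleton_iff] at this
  tauto

theorem ConvexIndependent.not_disjoint_segment_of_lineSide
    (hs : ConvexIndependent ℝ ((↑) : s → ℝ × ℝ))
    {p q r r' : ℝ × ℝ} (hp : p ∈ s) (hq : q ∈ s) (hpq : p ≠ q) (hr : r ∈ convexHull ℝ s)
    (hr' : r' ∈ convexHull ℝ s) (h0 : 0 ∈ Set.uIcc (lineSide p q r) (lineSide p q r')) :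
    ¬ Disjoint (segment ℝ r r') (segment ℝ p q) := by
  obtain ⟨ζ, hζ, hζ0⟩ := (lineSide p q).exists_mem_segment_eq_of_mem_uIcc h0
  exact Set.not_disjoint_iff.2 ⟨ζ, hζ, hs.mem_segment_of_collinear hp hq hpq
    ((convex_convexHull ℝ s).segment_subset hr hr' hζ) (collinear_of_lineSide_eq_zero hζ0)⟩

theorem ConvexIndependent.disjoint_convexHull_segment
    (hs : ConvexIndependent ℝ ((↑) : s → ℝ × ℝ))
    {A : Set (ℝ × ℝ)} (hA : A ⊆ s) {b b' : ℝ × ℝ} (hb : b ∈ s) (hb' : b' ∈ s) (hbA : b ∉ A)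
    (hchord : ∀ a ∈ A, ∀ a' ∈ A, Disjoint (segment ℝ a a') (segment ℝ b b')) :
    Disjoint (convexHull ℝ A) (segment ℝ b b') := by
  rcases eq_or_ne b b' with rfl | hbb'
  · rw [segment_same, Set.disjoint_singleton_right]
    exact fun h => hbA (convexIndependent_set_iff_inter_convexHull_subset.1 hs A hA ⟨hb, h⟩)
  refine Set.disjoint_left.2 fun z hzA hzb => ?_
  obtain ⟨a, ha, a', ha', h0⟩ := (lineSide b b').exists_mem_uIcc_of_mem_convexHull hzA
  rw [lineSide_eq_zero_of_mem_segment hzb] at h0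
  have hhull : ∀ x ∈ A, x ∈ convexHull ℝ s := fun x hx => subset_convexHull ℝ s (hA hx)
  exact hs.not_disjoint_segment_of_lineSide hb hb' hbb' (hhull a ha) (hhull a' ha') h0
    (hchord a ha a' ha')

theorem ConvexIndependent.disjoint_convexHull_of_disjoint_segment
    (hs : ConvexIndependent ℝ ((↑) : s → ℝ × ℝ))
    {A B : Set (ℝ × ℝ)} (hA : A.Finite) (hAs : A ⊆ s) (hBs : B ⊆ s) (hAB : Disjoint A B)
    (hchord : ∀ a ∈ A, ∀ a' ∈ A, ∀ b ∈ B, ∀ b' ∈ B,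
      Disjoint (segment ℝ a a') (segment ℝ b b')) :
    Disjoint (convexHull ℝ A) (convexHull ℝ B) := by
  induction A, hA using Set.Finite.induction_on with
  | empty => simp
  | @insert a A haA hA ih =>
    have haB : a ∉ convexHull ℝ B := fun h =>
      Set.disjoint_left.1 hAB (Set.mem_insert a A)
        (convexIndependent_set_iff_inter_convexHull_subset.1 hs B hBs
          ⟨hAs (Set.mem_insert a A), h⟩)
    rcases A.eq_empty_or_nonempty with rfl | hne
    · simpa using haB
    rw [Set.disjoint_left, convexHull_insert hne, convexJoin_singleton_left]
    simp only [Set.mem_iUnion₂]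
    rintro z ⟨w, hw, hzw⟩ hzB
    obtain ⟨b, hb, b', hb', h0⟩ := (lineSide a w).exists_mem_uIcc_of_mem_convexHull hzB
    rw [lineSide_eq_zero_of_mem_segment hzw] at h0
    obtain ⟨ζ, hζ, hζ0⟩ := (lineSide a w).exists_mem_segment_eq_of_mem_uIcc h0
    have hζB : ζ ∈ convexHull ℝ B := segment_subset_convexHull hb hb' hζ
    rcases (mem_segment_iff_wbtw.1 hzw).wbtw_or_wbtw_or_wbtw_of_collinear
      (collinear_of_lineSide_eq_zero hζ0) with h | h | h
    · have hζA : ζ ∈ convexHull ℝ (insert a A) :=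
        (convex_convexHull ℝ _).segment_subset (subset_convexHull ℝ _ (Set.mem_insert a A))
          (convexHull_mono (Set.subset_insert a A) hw) (mem_segment_iff_wbtw.2 h)
      exact Set.disjoint_left.1 (hs.disjoint_convexHull_segment hAs (hBs hb) (hBs hb')
        (Set.disjoint_right.1 hAB hb) fun x hx x' hx' => hchord x hx x' hx' b hb b' hb')
        hζA hζ
    · exact haB ((convex_convexHull ℝ B).segment_subset hzB hζB (mem_segment_iff_wbtw.2 h))
    · refine Set.disjoint_left.1 (ih ((Set.subset_insert a A).trans hAs)
        (hAB.mono_left (Set.subset_insert a A)) fun x hx x' hx' =>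
          hchord x (Set.mem_insert_of_mem a hx) x' (Set.mem_insert_of_mem a hx')) hw
        ((convex_convexHull ℝ B).segment_subset hzB hζB (mem_segment_iff_wbtw.2 h))

theorem ConvexIndependent.exists_dart_not_disjoint_segment
    (hs : ConvexIndependent ℝ ((↑) : s → ℝ × ℝ)) {p q : ℝ × ℝ} (hp : p ∈ s) (hq : q ∈ s)
    (hpq : p ≠ q) {V : Type*} {G : SimpleGraph V} (g : V → ℝ × ℝ) (hg : ∀ v, g v ∈ s)
    {b b' : V} (W : G.Walk b b') (hb'p : g b' ≠ p) (hb'q : g b' ≠ q)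
    (h : ¬ Disjoint (segment ℝ p q) (segment ℝ (g b) (g b'))) :
    ∃ d ∈ W.darts, ¬ Disjoint (segment ℝ p q) (segment ℝ (g d.fst) (g d.snd)) := by
  obtain ⟨x, hxpq, hxb⟩ := Set.not_disjoint_iff.1 h
  have h0 := (lineSide p q).mem_uIcc_of_mem_segment hxb
  rw [lineSide_eq_zero_of_mem_segment hxpq] at h0
  obtain ⟨d, hd, hd0⟩ := W.exists_dart_zero_mem_uIcc (fun v => lineSide p q (g v)) h0
    (hs.lineSide_ne_zero hp hq (hg b') hpq hb'p hb'q)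
  have hhull : ∀ v, g v ∈ convexHull ℝ s := fun v => subset_convexHull ℝ s (hg v)
  exact ⟨d, hd, disjoint_comm.not.1
    (hs.not_disjoint_segment_of_lineSide hp hq hpq (hhull _) (hhull _) hd0)⟩

end Plane

namespace UPSE

variable {V : Type*} {Adj : V → V → Prop} {S : Finset (ℝ × ℝ)} {f : V → ℝ × ℝ}

theorem disjoint_segment_of_adj (hf : UPSE Adj S f) {a b c d : V} (hab : Adj a b)
    (hcd : Adj c d) (hac : a ≠ c) (had : a ≠ d) (hbc : b ≠ c) (hbd : b ≠ d) :
    Disjoint (segment ℝ (f a) (f b)) (segment ℝ (f c) (f d)) := by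
  refine Set.disjoint_left.2 fun x h1 h2 => ?_
  obtain ⟨hx1, hx2⟩ := hf.2.2.2 a b c d hab hcd (by simp [hac]) x h1 h2
  simp only [Set.mem_insert_iff, Set.mem_singleton_iff] at hx1 hx2
  rcases hx1 with rfl | rfl <;> rcases hx2 with h | h <;> have := hf.1 h <;> contradiction

theorem disjoint_segment (hf : UPSE Adj S f) {a b c d : V}
    (hab : (SimpleGraph.fromRel Adj).Adj a b) (hcd : (SimpleGraph.fromRel Adj).Adj c d)
    (hac : a ≠ c) (had : a ≠ d) (hbc : b ≠ c) (hbd : b ≠ d) :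
    Disjoint (segment ℝ (f a) (f b)) (segment ℝ (f c) (f d)) := by
  rcases hab.2 with hab | hba <;> rcases hcd.2 with hcd | hdc
  · exact hf.disjoint_segment_of_adj hab hcd hac had hbc hbd
  · simpa only [segment_symm ℝ (f c)] using hf.disjoint_segment_of_adj hab hdc had hac hbd hbc
  · simpa only [segment_symm ℝ (f a)] using hf.disjoint_segment_of_adj hba hcd hbc hbd hac had
  · simpa only [segment_symm ℝ (f a), segment_symm ℝ (f c)] using
      hf.disjoint_segment_of_adj hba hdc hbd hbc had hac

theorem disjoint_segment_of_walks (hS : ConvexIndependent ℝ ((↑) : ↥(S : Set (ℝ × ℝ)) → ℝ × ℝ))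
    (hf : UPSE Adj S f) {a a' b b' : V} (Wa : (SimpleGraph.fromRel Adj).Walk a a')
    (Wb : (SimpleGraph.fromRel Adj).Walk b b') (hW : ∀ w ∈ Wa.support, w ∉ Wb.support) :
    Disjoint (segment ℝ (f a) (f a')) (segment ℝ (f b) (f b')) := by
  have hfS : ∀ v, f v ∈ (S : Set (ℝ × ℝ)) := hf.2.1
  have hne : ∀ {x y : V}, x ∈ Wa.support → y ∈ Wb.support → f y ≠ f x := fun hx hy h =>
    hW _ hx (hf.1 h ▸ hy)
  by_contra hcross
  rcases eq_or_ne a a' with rfl | haa'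
  · obtain ⟨x, hx, hxb⟩ := Set.not_disjoint_iff.1 hcross
    rw [segment_same, Set.mem_singleton_iff] at hx
    subst hx
    rcases (mem_extremePoints_iff_forall_segment.1 (hS.mem_extremePoints_convexHull (hfS a))).2 _
      (subset_convexHull ℝ _ (hfS b)) _ (subset_convexHull ℝ _ (hfS b')) hxb with h | h
    · exact hne Wa.start_mem_support Wb.start_mem_support h
    · exact hne Wa.start_mem_support Wb.end_mem_support h
  obtain ⟨d, hd, hcross'⟩ := hS.exists_dart_not_disjoint_segment (hfS a) (hfS a') (hf.1.ne haa')
    f hfS Wb (hne Wa.start_mem_support Wb.end_mem_support)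
    (hne Wa.end_mem_support Wb.end_mem_support) hcross
  have hd₁ := Wb.dart_fst_mem_support_of_mem_darts hd
  have hd₂ := Wb.dart_snd_mem_support_of_mem_darts hd
  obtain ⟨e, he, hcross''⟩ := hS.exists_dart_not_disjoint_segment (hfS d.fst) (hfS d.snd)
    (hf.1.ne d.adj.ne) f hfS Wa (hne Wa.end_mem_support hd₁).symm
    (hne Wa.end_mem_support hd₂).symm (disjoint_comm.not.1 hcross')
  have he₁ := Wa.dart_fst_mem_support_of_mem_darts he
  have he₂ := Wa.dart_snd_mem_support_of_mem_darts he
  exact hcross'' (hf.disjoint_segment d.adj e.adj (hf.1.ne_iff.1 (hne he₁ hd₁))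
    (hf.1.ne_iff.1 (hne he₂ hd₁)) (hf.1.ne_iff.1 (hne he₁ hd₂)) (hf.1.ne_iff.1 (hne he₂ hd₂)))

end UPSE

namespace ReachAvoiding

variable {V : Type*} {Adj : V → V → Prop} {u v : V}

theorem of_mem_support {a w : V} (W : (SimpleGraph.fromRel Adj).Walk v a) (hu : u ∉ W.support)
    (hw : w ∈ W.support) : ReachAvoiding Adj u v w := by
  classical
  exact ⟨W.takeUntil w hw, fun h => hu (W.support_takeUntil_subset_support hw h)⟩

theorem of_adj {a b : V} (ha : ReachAvoiding Adj u v a) (hab : (SimpleGraph.fromRel Adj).Adj a b)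
    (hb : b ≠ u) : ReachAvoiding Adj u v b := by
  obtain ⟨W, hW⟩ := ha
  exact ⟨W.concat hab, by simpa [SimpleGraph.Walk.support_concat, hW] using hb.symm⟩

theorem exists_walk {a a' : V} (ha : ReachAvoiding Adj u v a) (ha' : ReachAvoiding Adj u v a') :
    ∃ W : (SimpleGraph.fromRel Adj).Walk a a', ∀ w ∈ W.support, ReachAvoiding Adj u v w := by
  obtain ⟨Wa, hWa⟩ := ha
  obtain ⟨Wa', hWa'⟩ := ha'
  refine ⟨Wa.reverse.append Wa', fun w hw => ?_⟩
  rw [SimpleGraph.Walk.mem_support_append_iff, SimpleGraph.Walk.support_reverse,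
    List.mem_reverse] at hw
  exact hw.elim (of_mem_support Wa hWa) (of_mem_support Wa' hWa')

theorem exists_walk_to_center_not_reachAvoiding {b : V} (W : (SimpleGraph.fromRel Adj).Walk b u)
    (hb : ¬ ReachAvoiding Adj u v b) :
    ∃ W : (SimpleGraph.fromRel Adj).Walk b u, ∀ w ∈ W.support, ¬ ReachAvoiding Adj u v w := by
  induction W with
  | nil => exact ⟨.nil, by simpa using hb⟩
  | @cons b m u h W ih =>
    by_cases hm : ReachAvoiding Adj u v m
    · have hbu : b = u := by_contra fun hbu => hb (hm.of_adj h.symm hbu)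
      subst hbu
      exact ⟨.nil, by simpa using hb⟩
    · obtain ⟨W', hW'⟩ := ih hm
      exact ⟨.cons h W', by simpa [hb] using hW'⟩

theorem exists_walk_not_reachAvoiding (hconn : (SimpleGraph.fromRel Adj).Connected) {b b' : V}
    (hb : ¬ ReachAvoiding Adj u v b) (hb' : ¬ ReachAvoiding Adj u v b') :
    ∃ W : (SimpleGraph.fromRel Adj).Walk b b', ∀ w ∈ W.support, ¬ ReachAvoiding Adj u v w := by
  obtain ⟨Wb, hWb⟩ := exists_walk_to_center_not_reachAvoiding (hconn.preconnected b u).some hb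
  obtain ⟨Wb', hWb'⟩ := exists_walk_to_center_not_reachAvoiding (hconn.preconnected b' u).some hb'
  refine ⟨Wb.append Wb'.reverse, fun w hw => ?_⟩
  rw [SimpleGraph.Walk.mem_support_append_iff, SimpleGraph.Walk.support_reverse,
    List.mem_reverse] at hw
  exact hw.elim (hWb w) (hWb' w)

end ReachAvoiding

theorem ConvexPos.convexIndependent {S : Finset (ℝ × ℝ)} (hS : ConvexPos S) :
    ConvexIndependent ℝ ((↑) : ↥(S : Set (ℝ × ℝ)) → ℝ × ℝ) :=
  convexIndependent_set_iff_notMem_convexHull_sdiff.2 fun p hp => by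
    simpa [Finset.coe_erase] using hS.2 p hp

theorem UPSE.range_eq {V : Type*} [Fintype V] {Adj : V → V → Prop} {S : Finset (ℝ × ℝ)}
    {f : V → ℝ × ℝ} (hf : UPSE Adj S f) (hcard : S.card = Fintype.card V) :
    Set.range f = S := by
  classical
  have : Finset.univ.image f = S :=
    Finset.eq_of_subset_of_card_le (fun _ h => by
      obtain ⟨x, -, rfl⟩ := Finset.mem_image.1 h
      exact hf.2.1 x)
      (by rw [Finset.card_image_of_injective _ hf.1, hcard, Finset.card_univ])
  rw [← this, Finset.coe_image, Finset.coe_univ, Set.image_univ]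

theorem consecutiveIn_of_disjoint_convexHull {A : Set (ℝ × ℝ)} {S : Finset (ℝ × ℝ)}
    (hA : A.Finite) (h : Disjoint (convexHull ℝ A) (convexHull ℝ (↑S \ A))) :
    ConsecutiveIn A S := by
  obtain ⟨φ, c₁, c₂, hlt, hc, hgt⟩ := geometric_hahn_banach_compact_closed
    (convex_convexHull ℝ _) (S.finite_toSet.sdiff.isCompact_convexHull ℝ)
    (convex_convexHull ℝ _) (hA.isClosed_convexHull ℝ) h.symm
  exact ⟨φ, c₂, fun p hp => hgt p (subset_convexHull ℝ A hp),
    fun p hp => (hlt p (subset_convexHull ℝ _ hp)).trans hc⟩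

theorem components_consecutive {V : Type} [Fintype V] (Adj : V → V → Prop)
    (hT : IsDirTree Adj)
    (S : Finset (ℝ × ℝ)) (hS : ConvexPos S) (hcard : S.card = Fintype.card V)
    (u : V) (f : V → ℝ × ℝ) (hf : UPSE Adj S f) :
    ∀ v : V, v ≠ u → ConsecutiveIn (f '' {w | ReachAvoiding Adj u v w}) S := by
  intro v _
  set C := {w | ReachAvoiding Adj u v w}
  have hrest : ↑S \ f '' C = f '' Cᶜ := by
    rw [← hf.range_eq hcard, Set.image_compl_eq_range_sdiff_image hf.1]
  refine consecutiveIn_of_disjoint_convexHull (C.toFinite.image f) ?_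
  rw [hrest]
  refine hS.convexIndependent.disjoint_convexHull_of_disjoint_segment (C.toFinite.image f)
    (fun _ ⟨w, _, hw⟩ => hw ▸ hf.2.1 w) (fun _ ⟨w, _, hw⟩ => hw ▸ hf.2.1 w)
    ((Set.disjoint_image_iff hf.1).2 disjoint_compl_right) ?_
  rintro _ ⟨a, ha, rfl⟩ _ ⟨a', ha', rfl⟩ _ ⟨b, hb, rfl⟩ _ ⟨b', hb', rfl⟩
  obtain ⟨Wa, hWa⟩ := ReachAvoiding.exists_walk ha ha'
  obtain ⟨Wb, hWb⟩ := ReachAvoiding.exists_walk_not_reachAvoiding hT.2.2.connected hb hb'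
  exact hf.disjoint_segment_of_walks hS.convexIndependent Wa Wb fun w hw hw' =>
    hWb w hw' (hWa w hw)
end
end

section
/- Let S be a convex point set consisting of a bottom point b(S), a top point t(S), a left chain of points l_1 < l_2 < ... < l_N and a right chain r_1 < r_2 < ... < r_N (ordered by y-coordinate), interleaved so that y(b(S)) < y(r_1) < y(l_1) < y(r_2) < y(l_2) < ... < y(r_N) < y(l_N) < y(t(S)), where N = (3n-1)/2 for odd n ≥ 5. Then the largest subset of S that forms a one-sided convex point set has size N + 2 = ⌈(3n-1)/2⌉ + 2, which is strictly less than 2n. -/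
open Finset

noncomputable section

lemma mem_hull_aux (b t u w p : ℝ × ℝ) (hbt : b.2 < t.2) (huw : u.2 < w.2)
    (h1 : b.2 ≤ p.2) (h2 : p.2 ≤ t.2) (h3 : u.2 ≤ p.2) (h4 : p.2 ≤ w.2)
    (hL : 0 ≤ det2 (t - b) (p - b)) (hR : det2 (w - u) (p - u) ≤ 0) :
    p ∈ convexHull ℝ ({b, t, u, w} : Set (ℝ × ℝ)) := by
  set C := convexHull ℝ ({b, t, u, w} : Set (ℝ × ℝ)) with hC
  have hCc : Convex ℝ C := convex_convexHull ℝ _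
  have hbC : b ∈ C := subset_convexHull ℝ _ (by simp)
  have htC : t ∈ C := subset_convexHull ℝ _ (by simp)
  have huC : u ∈ C := subset_convexHull ℝ _ (by simp)
  have hwC : w ∈ C := subset_convexHull ℝ _ (by simp)
  have hbt' : (0:ℝ) < t.2 - b.2 := by linarith
  have huw' : (0:ℝ) < w.2 - u.2 := by linarith
  set s2 : ℝ := (p.2 - b.2) / (t.2 - b.2) with hs2
  set s1 : ℝ := (p.2 - u.2) / (w.2 - u.2) with hs1
  have hs2n : 0 ≤ s2 := div_nonneg (by linarith) hbt'.le
  have hs2le : s2 ≤ 1 := (div_le_one hbt').mpr (by linarith)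
  have hs1n : 0 ≤ s1 := div_nonneg (by linarith) huw'.le
  have hs1le : s1 ≤ 1 := (div_le_one huw').mpr (by linarith)
  set q2 : ℝ × ℝ := (1 - s2) • b + s2 • t with hq2
  set q1 : ℝ × ℝ := (1 - s1) • u + s1 • w with hq1
  have hq2C : q2 ∈ C := hCc hbC htC (by linarith) hs2n (by ring)
  have hq1C : q1 ∈ C := hCc huC hwC (by linarith) hs1n (by ring)
  have e2 : s2 * (t.2 - b.2) = p.2 - b.2 := div_mul_cancel₀ _ hbt'.ne'
  have e1 : s1 * (w.2 - u.2) = p.2 - u.2 := div_mul_cancel₀ _ huw'.ne'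
  have hq2snd : q2.2 = p.2 := by
    simp only [hq2, Prod.snd_add, Prod.smul_snd, smul_eq_mul]
    nlinarith [e2]
  have hq1snd : q1.2 = p.2 := by
    simp only [hq1, Prod.snd_add, Prod.smul_snd, smul_eq_mul]
    nlinarith [e1]
  have hLk : (t.2 - b.2) * (p.1 - b.1) ≤ (t.1 - b.1) * (p.2 - b.2) := by
    simp only [det2, Prod.fst_sub, Prod.snd_sub] at hL; linarith
  have hRk : (w.1 - u.1) * (p.2 - u.2) ≤ (w.2 - u.2) * (p.1 - u.1) := by
    simp only [det2, Prod.fst_sub, Prod.snd_sub] at hR; linarith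
  have e2' : s2 * (t.1 - b.1) * (t.2 - b.2) = (t.1 - b.1) * (p.2 - b.2) := by
    rw [mul_comm s2 (t.1 - b.1), mul_assoc, e2]
  have e1' : s1 * (w.1 - u.1) * (w.2 - u.2) = (w.1 - u.1) * (p.2 - u.2) := by
    rw [mul_comm s1 (w.1 - u.1), mul_assoc, e1]
  have hq2fst : p.1 ≤ q2.1 := by
    simp only [hq2, Prod.fst_add, Prod.smul_fst, smul_eq_mul]
    nlinarith [hLk, e2', hbt']
  have hq1fst : q1.1 ≤ p.1 := by
    simp only [hq1, Prod.fst_add, Prod.smul_fst, smul_eq_mul]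
    nlinarith [hRk, e1', huw']
  rcases eq_or_lt_of_le (le_trans hq1fst hq2fst) with heq | hlt'
  · have hp1 : p.1 = q1.1 := le_antisymm (heq ▸ hq2fst) hq1fst
    have : p = q1 := Prod.ext hp1 hq1snd.symm
    rwa [this]
  · have hd : (0:ℝ) < q2.1 - q1.1 := by linarith
    set c : ℝ := (p.1 - q1.1) / (q2.1 - q1.1) with hc
    have hc0 : 0 ≤ c := div_nonneg (by linarith) hd.le
    have hc1 : c ≤ 1 := (div_le_one hd).mpr (by linarith)
    have ec : c * (q2.1 - q1.1) = p.1 - q1.1 := div_mul_cancel₀ _ hd.ne'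
    have hf : ((1 - c) • q1 + c • q2 : ℝ × ℝ).1 = p.1 := by
      simp only [Prod.fst_add, Prod.smul_fst, smul_eq_mul]
      linear_combination ec
    have hs : ((1 - c) • q1 + c • q2 : ℝ × ℝ).2 = p.2 := by
      simp only [Prod.snd_add, Prod.smul_snd, smul_eq_mul, hq1snd, hq2snd]
      ring
    have heqp : (1 - c) • q1 + c • q2 = p := Prod.ext hf hs
    have hmem := hCc hq1C hq2C (sub_nonneg.mpr hc1) hc0 (by ring)
    rwa [heqp] at hmem

lemma key_lt (S : Finset (ℝ × ℝ)) (hconv : ConvexPos S)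
    (b t u w p : ℝ × ℝ) (hbS : b ∈ S) (htS : t ∈ S) (huS : u ∈ S) (hwS : w ∈ S)
    (hpS : p ∈ S)
    (h1 : b.2 < p.2) (h2 : p.2 < t.2) (h3 : u.2 < p.2) (h4 : p.2 < w.2)
    (hL : 0 < det2 (t - b) (p - b)) : 0 < det2 (w - u) (p - u) := by
  by_contra h
  push_neg at h
  have hmem := mem_hull_aux b t u w p (by linarith) (by linarith) h1.le h2.le h3.le h4.le
    hL.le h
  have hsub : ({b, t, u, w} : Set (ℝ × ℝ)) ⊆ ↑(S.erase p) := by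
    intro x hx
    simp only [Set.mem_insert_iff, Set.mem_singleton_iff] at hx
    simp only [Finset.coe_erase, Set.mem_diff, Finset.mem_coe, Set.mem_singleton_iff]
    rcases hx with rfl | rfl | rfl | rfl
    · exact ⟨hbS, fun he => absurd (congrArg Prod.snd he) (ne_of_lt h1)⟩
    · exact ⟨htS, fun he => absurd (congrArg Prod.snd he) (ne_of_gt h2)⟩
    · exact ⟨huS, fun he => absurd (congrArg Prod.snd he) (ne_of_lt h3)⟩
    · exact ⟨hwS, fun he => absurd (congrArg Prod.snd he) (ne_of_gt h4)⟩
  exact hconv.2 p hpS (convexHull_mono hsub hmem)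

lemma key_gt (S : Finset (ℝ × ℝ)) (hconv : ConvexPos S)
    (b t u w p : ℝ × ℝ) (hbS : b ∈ S) (htS : t ∈ S) (huS : u ∈ S) (hwS : w ∈ S)
    (hpS : p ∈ S)
    (h1 : b.2 < p.2) (h2 : p.2 < t.2) (h3 : u.2 < p.2) (h4 : p.2 < w.2)
    (hR : det2 (t - b) (p - b) < 0) : det2 (w - u) (p - u) < 0 := by
  by_contra h
  push_neg at h
  have hmem := mem_hull_aux u w b t p (by linarith) (by linarith) h3.le h4.le h1.le h2.le
    h hR.le
  have hsub : ({u, w, b, t} : Set (ℝ × ℝ)) ⊆ ↑(S.erase p) := by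
    intro x hx
    simp only [Set.mem_insert_iff, Set.mem_singleton_iff] at hx
    simp only [Finset.coe_erase, Set.mem_diff, Finset.mem_coe, Set.mem_singleton_iff]
    rcases hx with rfl | rfl | rfl | rfl
    · exact ⟨huS, fun he => absurd (congrArg Prod.snd he) (ne_of_lt h3)⟩
    · exact ⟨hwS, fun he => absurd (congrArg Prod.snd he) (ne_of_gt h4)⟩
    · exact ⟨hbS, fun he => absurd (congrArg Prod.snd he) (ne_of_lt h1)⟩
    · exact ⟨htS, fun he => absurd (congrArg Prod.snd he) (ne_of_gt h2)⟩
  exact hconv.2 p hpS (convexHull_mono hsub hmem)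

lemma convexPos_subset {A S : Finset (ℝ × ℝ)} (hAS : A ⊆ S) (h : ConvexPos S) :
    ConvexPos A := by
  refine ⟨⟨fun p hp q hq => h.1.1 p (hAS hp) q (hAS hq),
    fun p hp q hq r hr => h.1.2 p (hAS hp) q (hAS hq) r (hAS hr)⟩, ?_⟩
  intro p hp hmem
  exact h.2 p (hAS hp)
    (convexHull_mono (Finset.coe_subset.mpr (Finset.erase_subset_erase p hAS)) hmem)

theorem largest_one_sided_subset (n N : ℕ) (hn : 5 ≤ n) (hodd : Odd n)
    (hN : 2 * N = 3 * n - 1)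
    (b t : ℝ × ℝ) (l r : Fin N → ℝ × ℝ)
    (S : Finset (ℝ × ℝ))
    (hSdef : S = insert b (insert t
      (Finset.image l Finset.univ ∪ Finset.image r Finset.univ)))
    (hconv : ConvexPos S) (hcard : S.card = 3 * n + 1)
    (hbr : ∀ i, b.2 < (r i).2) (hlt : ∀ i, (l i).2 < t.2)
    (hrl : ∀ i, (r i).2 < (l i).2)
    (hlr : ∀ i j : Fin N, (i : ℕ) + 1 = (j : ℕ) → (l i).2 < (r j).2)
    (hleft : ∀ i, 0 < det2 (t - b) (l i - b))
    (hright : ∀ i, det2 (t - b) (r i - b) < 0) :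
    (∀ A : Finset (ℝ × ℝ), A ⊆ S → OneSided A → A.card ≤ N + 2) ∧
    (∃ A : Finset (ℝ × ℝ), A ⊆ S ∧ OneSided A ∧ A.card = N + 2) ∧
    N + 2 < 2 * n := by
  have hN1 : 0 < N := by omega
  have i0 : Fin N := ⟨0, hN1⟩
  have hbl : ∀ i, b.2 < (l i).2 := fun i => lt_trans (hbr i) (hrl i)
  have hrt : ∀ i, (r i).2 < t.2 := fun i => lt_trans (hrl i) (hlt i)
  have hbt2 : b.2 < t.2 := lt_trans (hbr i0) (hrt i0)
  have hbS : b ∈ S := by rw [hSdef]; simp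
  have htS : t ∈ S := by rw [hSdef]; simp
  have hlS : ∀ i, l i ∈ S := by
    intro i; rw [hSdef]
    exact Finset.mem_insert_of_mem (Finset.mem_insert_of_mem
      (Finset.mem_union_left _ (Finset.mem_image.mpr ⟨i, Finset.mem_univ i, rfl⟩)))
  have hrS : ∀ i, r i ∈ S := by
    intro i; rw [hSdef]
    exact Finset.mem_insert_of_mem (Finset.mem_insert_of_mem
      (Finset.mem_union_right _ (Finset.mem_image.mpr ⟨i, Finset.mem_univ i, rfl⟩)))
  have hSmem : ∀ q ∈ S, q = b ∨ q = t ∨ (∃ i, l i = q) ∨ (∃ i, r i = q) := by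
    intro q hq; rw [hSdef] at hq
    simpa [Finset.mem_insert, Finset.mem_union, Finset.mem_image] using hq
  have hblow : ∀ q ∈ S, b.2 ≤ q.2 := by
    intro q hq
    rcases hSmem q hq with rfl | rfl | ⟨i, rfl⟩ | ⟨i, rfl⟩
    · exact le_refl _
    · exact hbt2.le
    · exact (hbl i).le
    · exact (hbr i).le
  have hthigh : ∀ q ∈ S, q.2 ≤ t.2 := by
    intro q hq
    rcases hSmem q hq with rfl | rfl | ⟨i, rfl⟩ | ⟨i, rfl⟩
    · exact hbt2.le
    · exact le_refl _
    · exact (hlt i).le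
    · exact (hrt i).le
  have hyne : ∀ p ∈ S, ∀ q ∈ S, p.2 = q.2 → p = q := by
    intro p hp q hq h
    by_contra hne
    exact hconv.1.1 p hp q hq hne h
  refine ⟨?_, ?_, by omega⟩
  · -- upper bound
    intro A hAS hOS
    obtain ⟨hconvA, b', t', ⟨hb'A, hb'low⟩, ⟨ht'A, ht'high⟩, hside⟩ := hOS
    have hb'S := hAS hb'A
    have ht'S := hAS ht'A
    have hlowstrict : ∀ p ∈ A, p ≠ b' → b'.2 < p.2 := by
      intro p hp hne
      refine lt_of_le_of_ne (hb'low p hp) fun h => hne ?_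
      exact (hyne p (hAS hp) b' hb'S h.symm)
    have hhighstrict : ∀ p ∈ A, p ≠ t' → p.2 < t'.2 := by
      intro p hp hne
      refine lt_of_le_of_ne (ht'high p hp) fun h => hne ?_
      exact (hyne p (hAS hp) t' ht'S h)
    have hPl : ∀ i, l i ∈ A → l i ≠ b' → l i ≠ t' →
        0 < det2 (t' - b') (l i - b') :=
      fun i hi h1 h2 => key_lt S hconv b t b' t' (l i) hbS htS hb'S ht'S (hlS i)
        (hbl i) (hlt i) (hlowstrict _ hi h1) (hhighstrict _ hi h2) (hleft i)
    have hPr : ∀ j, r j ∈ A → r j ≠ b' → r j ≠ t' →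
        det2 (t' - b') (r j - b') < 0 :=
      fun j hj h1 h2 => key_gt S hconv b t b' t' (r j) hbS htS hb'S ht'S (hrS j)
        (hbr j) (hrt j) (hlowstrict _ hj h1) (hhighstrict _ hj h2) (hright j)
    have hbA : ∀ p ∈ A, p = b → p = b' := by
      intro p hp hpb; subst hpb
      exact hyne _ hbS _ hb'S (le_antisymm (hblow b' hb'S) (hb'low _ hp))
    have htA : ∀ p ∈ A, p = t → p = t' := by
      intro p hp hpt; subst hpt
      exact hyne _ htS _ ht'S (le_antisymm (ht'high _ hp) (hthigh t' ht'S))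
    set P : Finset (ℝ × ℝ) := (A.erase b').erase t' with hP
    have hPfacts : ∀ p ∈ P, p ∈ A ∧ p ≠ b' ∧ p ≠ t' := by
      intro p hp
      rw [hP, Finset.mem_erase, Finset.mem_erase] at hp
      exact ⟨hp.2.2, hp.2.1, hp.1⟩
    have hcardA : A.card ≤ P.card + 2 := by
      have hsub : A ⊆ insert b' (insert t' P) := by
        intro p hp
        rcases eq_or_ne p b' with rfl | h1
        · exact Finset.mem_insert_self _ _
        rcases eq_or_ne p t' with rfl | h2
        · exact Finset.mem_insert_of_mem (Finset.mem_insert_self _ _)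
        refine Finset.mem_insert_of_mem (Finset.mem_insert_of_mem ?_)
        rw [hP, Finset.mem_erase, Finset.mem_erase]
        exact ⟨h2, h1, hp⟩
      calc A.card ≤ (insert b' (insert t' P)).card := Finset.card_le_card hsub
        _ ≤ (insert t' P).card + 1 := Finset.card_insert_le _ _
        _ ≤ P.card + 2 := by
            have := Finset.card_insert_le t' P; omega
    have hPmem : ∀ p ∈ P, (∃ i, l i = p) ∨ (∃ j, r j = p) := by
      intro p hp
      obtain ⟨hpA, hpb', hpt'⟩ := hPfacts p hp
      rcases hSmem p (hAS hpA) with rfl | rfl | h | h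
      · exact absurd (hbA _ hpA rfl) hpb'
      · exact absurd (htA _ hpA rfl) hpt'
      · exact Or.inl h
      · exact Or.inr h
    have himl : (Finset.image l Finset.univ).card ≤ N := by
      refine le_trans Finset.card_image_le ?_
      simp
    have himr : (Finset.image r Finset.univ).card ≤ N := by
      refine le_trans Finset.card_image_le ?_
      simp
    rcases hside with hside | hside
    · have hPsub : P ⊆ Finset.image l Finset.univ := by
        intro p hp
        obtain ⟨hpA, hpb', hpt'⟩ := hPfacts p hp
        rcases hPmem p hp with ⟨i, rfl⟩ | ⟨j, rfl⟩
        · exact Finset.mem_image.mpr ⟨i, Finset.mem_univ i, rfl⟩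
        · exact absurd (hside _ hpA hpb' hpt')
            (not_lt.mpr (hPr j hpA hpb' hpt').le)
      have := Finset.card_le_card hPsub
      omega
    · have hPsub : P ⊆ Finset.image r Finset.univ := by
        intro p hp
        obtain ⟨hpA, hpb', hpt'⟩ := hPfacts p hp
        rcases hPmem p hp with ⟨i, rfl⟩ | ⟨j, rfl⟩
        · exact absurd (hside _ hpA hpb' hpt')
            (not_lt.mpr (hPl i hpA hpb' hpt').le)
        · exact Finset.mem_image.mpr ⟨j, Finset.mem_univ j, rfl⟩
      have := Finset.card_le_card hPsub
      omega
  · -- the extremal example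
    have hlmono : ∀ i j : Fin N, (i : ℕ) < (j : ℕ) → (l i).2 < (l j).2 := by
      have step : ∀ i j : Fin N, (i : ℕ) + 1 = (j : ℕ) → (l i).2 < (l j).2 :=
        fun i j h => lt_trans (hlr i j h) (hrl j)
      intro i j hij
      obtain ⟨k, hk⟩ : ∃ k, (j : ℕ) = (i : ℕ) + k + 1 := ⟨(j : ℕ) - i - 1, by omega⟩
      clear hij
      induction k generalizing j with
      | zero => exact step i j (by omega)
      | succ k ih =>
        have hj' : (i : ℕ) + k + 1 < N := by have := j.isLt; omega
        have hlast := step ⟨(i : ℕ) + k + 1, hj'⟩ j (by simpa using by omega)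
        exact lt_trans (ih ⟨(i : ℕ) + k + 1, hj'⟩ rfl) hlast
    have hlinj : Function.Injective l := by
      intro i j hij
      by_contra hne
      have hne' : (i : ℕ) ≠ (j : ℕ) := fun h => hne (Fin.ext h)
      rcases lt_or_gt_of_ne hne' with h | h
      · exact absurd (congrArg Prod.snd hij) (ne_of_lt (hlmono i j h))
      · exact absurd (congrArg Prod.snd hij) (ne_of_gt (hlmono j i h))
    set A : Finset (ℝ × ℝ) := insert b (insert t (Finset.image l Finset.univ))
      with hA
    have hAmem : ∀ p ∈ A, p = b ∨ p = t ∨ ∃ i, l i = p := by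
      intro p hp
      rw [hA] at hp
      simpa [Finset.mem_insert, Finset.mem_image] using hp
    have hAS : A ⊆ S := by
      intro p hp
      rcases hAmem p hp with rfl | rfl | ⟨i, rfl⟩
      · exact hbS
      · exact htS
      · exact hlS i
    have hbnotim : b ∉ insert t (Finset.image l Finset.univ) := by
      simp only [Finset.mem_insert, Finset.mem_image, Finset.mem_univ, true_and,
        not_or, not_exists]
      constructor
      · exact fun h => absurd (congrArg Prod.snd h) (ne_of_lt hbt2)
      · exact fun i h => absurd (congrArg Prod.snd h) (ne_of_gt (hbl i))
    have htnotim : t ∉ Finset.image l Finset.univ := by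
      simp only [Finset.mem_image, Finset.mem_univ, true_and, not_exists]
      exact fun i h => absurd (congrArg Prod.snd h) (ne_of_lt (hlt i))
    have hcardA : A.card = N + 2 := by
      rw [hA, Finset.card_insert_of_notMem hbnotim,
        Finset.card_insert_of_notMem htnotim,
        Finset.card_image_of_injective _ hlinj, Finset.card_univ, Fintype.card_fin]
    refine ⟨A, hAS, ⟨convexPos_subset hAS hconv, b, t, ⟨?_, ?_⟩, ⟨?_, ?_⟩, ?_⟩, hcardA⟩
    · rw [hA]; exact Finset.mem_insert_self _ _
    · intro p hp
      rcases hAmem p hp with rfl | rfl | ⟨i, rfl⟩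
      · exact le_refl _
      · exact hbt2.le
      · exact (hbl i).le
    · rw [hA]; exact Finset.mem_insert_of_mem (Finset.mem_insert_self _ _)
    · intro p hp
      rcases hAmem p hp with rfl | rfl | ⟨i, rfl⟩
      · exact hbt2.le
      · exact le_refl _
      · exact (hlt i).le
    · left
      intro p hp hpb hpt
      rcases hAmem p hp with rfl | rfl | ⟨i, rfl⟩
      · exact absurd rfl hpb
      · exact absurd rfl hpt
      · exact hleft i
end
end
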